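/- arXiv:2605.11472 — 2 statements merged into one kernel-verified Lean document; each statement's English description precedes it below -/
import Mathlib

section
/- Let G be a finite group, H a normal subgroup of G, f : G → ℂ a class function on G, and τ₁, τ₂ finite-dimensional complex representations of H with characters χ_{τ₁}, χ_{τ₂}. Then (1/|H|) · Σ_{g ∈ G} ⟨ (f|_H) · χ_{τ₁^g}, χ_{τ₂} ⟩_H = ⟨ f · χ_{Ind τ₁}, χ_{Ind τ₂} ⟩_G, where χ_{Ind τᵢ} is the character of the induced representation Ind_H^G τᵢ; note that each inner product ⟨(f|_H) · χ_{τ₁^g}, χ_{τ₂}⟩_H depends only on the coset gH, so the left-hand side equals the sum over the left cosets gH ∈ G/H of ⟨(f|_H) · χ_{τ₁^g}, χ_{τ₂}⟩_H. -/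
noncomputable section

open scoped TensorProduct

namespace McKaySlodowy

variable {G : Type*} [Group G] {H : Subgroup G}
variable {V : Type*} [AddCommGroup V] [Module ℂ V]

/-- The conjugate representation `τ^g`, given by `h ↦ τ (g h g⁻¹)`, for `H` normal in `G`. -/
def conjRep (hH : H.Normal) (τ : Representation ℂ H V) (g : G) :
    Representation ℂ H V where
  toFun h := τ ⟨g * h * g⁻¹, hH.conj_mem _ h.2 g⟩
  map_one' := by
    have : (⟨g * ((1 : H) : G) * g⁻¹, hH.conj_mem _ (1 : H).2 g⟩ : H) = 1 := by
      ext; simp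
    show τ ⟨g * ((1 : H) : G) * g⁻¹, hH.conj_mem _ (1 : H).2 g⟩ = 1
    rw [this, map_one]
  map_mul' h₁ h₂ := by
    have : (⟨g * ((h₁ * h₂ : H) : G) * g⁻¹, hH.conj_mem _ (h₁ * h₂).2 g⟩ : H)
        = ⟨g * (h₁ : G) * g⁻¹, hH.conj_mem _ h₁.2 g⟩ * ⟨g * (h₂ : G) * g⁻¹, hH.conj_mem _ h₂.2 g⟩ := by
      ext; push_cast; group
    show τ ⟨g * ((h₁ * h₂ : H) : G) * g⁻¹, hH.conj_mem _ (h₁ * h₂).2 g⟩ = _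
    rw [this, map_mul]

/-- The underlying space of the induced representation `Ind_H^G τ`, realized as the space of
functions `f : G → V` with `f (h * x) = τ h (f x)`;  for finite groups this is a model of
`ℂ[G] ⊗_{ℂ[H]} V`. -/
def IndV (τ : Representation ℂ H V) : Submodule ℂ (G → V) where
  carrier := {f | ∀ (h : H) (x : G), f (h * x) = τ h (f x)}
  add_mem' := fun hf hg h x => by
    simp only [Pi.add_apply, hf h x, hg h x, map_add]
  zero_mem' := fun h x => by simp
  smul_mem' := fun c f hf h x => by simp [hf h x]

theorem mem_IndV {τ : Representation ℂ H V} {f : G → V} :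
    f ∈ IndV τ ↔ ∀ (h : H) (x : G), f ((h : G) * x) = τ h (f x) := Iff.rfl

/-- The induced representation `Ind_H^G τ`. -/
def ind (τ : Representation ℂ H V) : Representation ℂ G (IndV τ) where
  toFun g :=
    { toFun := fun f => ⟨fun x => f.1 (x * g), fun h x => by
        simpa [mul_assoc] using f.2 h (x * g)⟩
      map_add' := fun f₁ f₂ => rfl
      map_smul' := fun c f => rfl }
  map_one' := LinearMap.ext fun f => Subtype.ext (funext fun x => by simp)
  map_mul' g₁ g₂ := LinearMap.ext fun f => Subtype.ext (funext fun x => by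
    simp [mul_assoc])

/-- The character of a representation. -/
def rchar {K : Type*} [Monoid K] {W : Type*} [AddCommGroup W] [Module ℂ W]
    (ρ : Representation ℂ K W) : K → ℂ :=
  fun k => LinearMap.trace ℂ W (ρ k)

/-- The inner product `⟨α, β⟩_K = (1/|K|) ∑ k, α k * conj (β k)` of class functions on a
finite group `K`. -/
def charInner (K : Type*) [Fintype K] (α β : K → ℂ) : ℂ :=
  (Fintype.card K : ℂ)⁻¹ * ∑ k, α k * (starRingEnd ℂ) (β k)

/-- The space `Hom_{ℂ[K]}(σ₁, σ₂)` of equivariant linear maps between two representations. -/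
def repHom {K : Type*} [Monoid K] {W₁ W₂ : Type*} [AddCommGroup W₁] [Module ℂ W₁]
    [AddCommGroup W₂] [Module ℂ W₂] (σ₁ : Representation ℂ K W₁) (σ₂ : Representation ℂ K W₂) :
    Submodule ℂ (W₁ →ₗ[ℂ] W₂) where
  carrier := {φ | ∀ k : K, φ ∘ₗ (σ₁ k) = (σ₂ k) ∘ₗ φ}
  add_mem' := fun h₁ h₂ k => by
    simp only [LinearMap.add_comp, LinearMap.comp_add, h₁ k, h₂ k]
  zero_mem' := fun k => by simp
  smul_mem' := fun c φ hφ k => by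
    simp only [LinearMap.smul_comp, LinearMap.comp_smul, hφ k]

/-- A representation is irreducible if the space is nonzero and the only invariant subspaces
are `⊥` and `⊤`. -/
def IsIrreducible {K : Type*} [Monoid K] {W : Type*} [AddCommGroup W] [Module ℂ W]
    (σ : Representation ℂ K W) : Prop :=
  Nontrivial W ∧ ∀ p : Submodule ℂ W, (∀ (k : K) (w : W), w ∈ p → σ k w ∈ p) → p = ⊥ ∨ p = ⊤

/-- `SL₂(ℂ)`. -/
abbrev SL2 : Type := Matrix.SpecialLinearGroup (Fin 2) ℂ

/-- The natural 2-dimensional representation of a subgroup of `SL₂(ℂ)`. -/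
def natRep (G' : Subgroup SL2) : Representation ℂ G' (Fin 2 → ℂ) where
  toFun g := Matrix.toLinAlgEquiv' ((g : SL2) : Matrix (Fin 2) (Fin 2) ℂ)
  map_one' := by simp
  map_mul' g₁ g₂ := by simp


section Aux

open Finset

lemma trace_pi {ι : Type*} [Fintype ι] [DecidableEq ι] {W : Type*} [AddCommGroup W]
    [Module ℂ W] [FiniteDimensional ℂ W] (A : (ι → W) →ₗ[ℂ] (ι → W)) :
    LinearMap.trace ℂ (ι → W) A
      = ∑ i, LinearMap.trace ℂ W
          ((LinearMap.proj i) ∘ₗ A ∘ₗ (LinearMap.single ℂ (fun _ => W) i)) := by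
  classical
  let b := Module.Free.chooseBasis ℂ W
  rw [LinearMap.trace_eq_matrix_trace ℂ (Pi.basis fun _ : ι => b) A]
  have : ∀ i, LinearMap.trace ℂ W ((LinearMap.proj i) ∘ₗ A ∘ₗ (LinearMap.single ℂ (fun _ => W) i))
      = Matrix.trace (LinearMap.toMatrix b b
          ((LinearMap.proj i) ∘ₗ A ∘ₗ (LinearMap.single ℂ (fun _ => W) i))) :=
    fun i => LinearMap.trace_eq_matrix_trace ℂ b _
  simp only [this, Matrix.trace, Matrix.diag]
  rw [← Finset.univ_sigma_univ, Finset.sum_sigma]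
  refine Finset.sum_congr rfl fun i _ => Finset.sum_congr rfl fun k _ => ?_
  simp [LinearMap.toMatrix_apply, Pi.basis_apply, Pi.basis_repr]

open scoped Classical in
/-- `w ↦ χ_τ(w)` for `w ∈ H`, and `0` otherwise. -/
def Dfun (τ : Representation ℂ H V) (w : G) : ℂ :=
  if hw : w ∈ H then rchar τ ⟨w, hw⟩ else 0

lemma Dfun_pos (τ : Representation ℂ H V) {w : G} (hw : w ∈ H) :
    Dfun τ w = rchar τ ⟨w, hw⟩ := dif_pos hw

lemma Dfun_neg (τ : Representation ℂ H V) {w : G} (hw : w ∉ H) :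
    Dfun τ w = 0 := dif_neg hw

variable [Fintype G] [Fintype H] [FiniteDimensional ℂ V] [DecidableEq G]

set_option linter.unusedSectionVars false

/-- The averaging projection onto `IndV τ`. -/
def avgP (τ : Representation ℂ H V) : (G → V) →ₗ[ℂ] (G → V) where
  toFun F := fun x => (Fintype.card H : ℂ)⁻¹ • ∑ h : H, τ h⁻¹ (F ((h : G) * x))
  map_add' F₁ F₂ := funext fun x => by
    simp [Finset.sum_add_distrib, smul_add]
  map_smul' c F := funext fun x => by
    simp [Finset.smul_sum, smul_comm c]

lemma avgP_mem (τ : Representation ℂ H V) (F : G → V) : avgP τ F ∈ IndV τ := by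
  intro h x
  show (Fintype.card H : ℂ)⁻¹ • ∑ h' : H, τ h'⁻¹ (F ((h' : G) * ((h : G) * x)))
      = τ h ((Fintype.card H : ℂ)⁻¹ • ∑ h' : H, τ h'⁻¹ (F ((h' : G) * x)))
  rw [map_smul, map_sum]
  congr 1
  rw [← Equiv.sum_comp (Equiv.mulRight h⁻¹)
    (fun h' : H => τ h'⁻¹ (F ((h' : G) * ((h : G) * x))))]
  refine Finset.sum_congr rfl fun j _ => ?_
  simp only [Equiv.coe_mulRight]
  rw [← Module.End.mul_apply, ← map_mul]
  have h1 : (j * h⁻¹ : H)⁻¹ = h * j⁻¹ := by group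
  have h2 : ((j * h⁻¹ : H) : G) * ((h : G) * x) = (j : G) * x := by push_cast; group
  rw [h1, h2]

lemma avgP_of_mem (τ : Representation ℂ H V) {F : G → V} (hF : F ∈ IndV τ) : avgP τ F = F := by
  funext x
  show (Fintype.card H : ℂ)⁻¹ • ∑ h : H, τ h⁻¹ (F ((h : G) * x)) = F x
  have : ∀ h : H, τ h⁻¹ (F ((h : G) * x)) = F x := fun h => by
    rw [hF h x, ← Module.End.mul_apply, ← map_mul, inv_mul_cancel, map_one, Module.End.one_apply]
  rw [Finset.sum_congr rfl fun h _ => this h, Finset.sum_const, Finset.card_univ,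
    ← Nat.cast_smul_eq_nsmul ℂ, smul_smul, inv_mul_cancel₀, one_smul]
  exact_mod_cast Fintype.card_ne_zero

/-- Right translation on `G → V`. -/
def shiftL (g : G) : (G → V) →ₗ[ℂ] (G → V) where
  toFun F := fun x => F (x * g)
  map_add' _ _ := rfl
  map_smul' _ _ := rfl

/-- The induced character formula. -/
lemma rchar_ind (τ : Representation ℂ H V) (g : G) :
    rchar (ind τ) g = (Fintype.card H : ℂ)⁻¹ * ∑ x : G, Dfun τ (x * g * x⁻¹) := by
  classical
  have key : (ind τ g : IndV τ →ₗ[ℂ] IndV τ)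
      = (LinearMap.codRestrict (IndV τ) (avgP τ) (avgP_mem τ)) ∘ₗ
          ((shiftL g) ∘ₗ (IndV τ).subtype) := by
    apply LinearMap.ext
    rintro ⟨F, hF⟩
    apply Subtype.ext
    have hmem : (fun x => F (x * g)) ∈ IndV τ := fun h x => by
      simpa [mul_assoc] using hF h (x * g)
    show (fun x => F (x * g)) = avgP τ (fun x => F (x * g))
    exact (avgP_of_mem τ hmem).symm
  have htr : rchar (ind τ) g
      = LinearMap.trace ℂ (G → V) ((shiftL g) ∘ₗ (avgP τ)) := by
    rw [rchar, key, LinearMap.trace_comp_comm']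
    congr 1
  rw [htr, trace_pi, Finset.mul_sum]
  refine Finset.sum_congr rfl fun x _ => ?_
  have hblock : (LinearMap.proj x) ∘ₗ ((shiftL g) ∘ₗ (avgP τ)) ∘ₗ (LinearMap.single ℂ (fun _ => V) x)
      = (Fintype.card H : ℂ)⁻¹ •
        (if hx : x * g * x⁻¹ ∈ H then (τ ⟨x * g * x⁻¹, hx⟩ : V →ₗ[ℂ] V) else 0) := by
    apply LinearMap.ext; intro v
    show (Fintype.card H : ℂ)⁻¹ • ∑ h : H, τ h⁻¹ ((Pi.single x v : G → V) ((h : G) * (x * g))) = _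
    have hterm : ∀ h : H, τ h⁻¹ ((Pi.single x v : G → V) ((h : G) * (x * g)))
        = if (h : G) = x * g⁻¹ * x⁻¹ then τ h⁻¹ v else 0 := by
      intro h
      rw [Pi.single_apply]
      have hiff : ((h : G) * (x * g) = x) ↔ ((h : G) = x * g⁻¹ * x⁻¹) := by
        rw [← eq_mul_inv_iff_mul_eq]
        constructor <;> intro hh <;> rw [hh] <;> group
      by_cases hc : (h : G) * (x * g) = x
      · rw [if_pos hc, if_pos (hiff.mp hc)]
      · rw [if_neg hc, if_neg (fun hh => hc (hiff.mpr hh)), map_zero]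
    rw [Finset.sum_congr rfl fun h _ => hterm h]
    by_cases hx : x * g * x⁻¹ ∈ H
    · have hx' : x * g⁻¹ * x⁻¹ ∈ H := by
        have := H.inv_mem hx
        simpa [mul_assoc] using this
      rw [dif_pos hx]
      have heq : ∀ h : H, ((h : G) = x * g⁻¹ * x⁻¹) ↔ (h = ⟨x * g⁻¹ * x⁻¹, hx'⟩) := by
        intro h; constructor <;> intro hh
        · exact Subtype.ext hh
        · rw [hh]
      rw [Finset.sum_congr rfl fun h _ => by rw [if_congr (heq h) rfl rfl]]
      rw [Finset.sum_ite_eq' Finset.univ (⟨x * g⁻¹ * x⁻¹, hx'⟩ : H)]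
      simp only [Finset.mem_univ, if_true, LinearMap.smul_apply]
      congr 2
      apply congrArg
      ext
      push_cast
      group
    · rw [dif_neg hx]
      have hnone : ∀ h : H, ¬((h : G) = x * g⁻¹ * x⁻¹) := by
        intro h hh
        apply hx
        have h1 : x * g⁻¹ * x⁻¹ ∈ H := hh ▸ h.2
        have := H.inv_mem h1
        simpa [mul_assoc] using this
      simp [hnone]
  rw [hblock, map_smul, Dfun, smul_eq_mul]
  congr 1
  split_ifs with hx
  · rfl
  · exact map_zero _

lemma sum_eq_sum_subgroup (F : G → ℂ) (h0 : ∀ k, k ∉ H → F k = 0) :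
    ∑ k : G, F k = ∑ h : H, F ↑h := by
  classical
  rw [← Finset.sum_filter_add_sum_filter_not Finset.univ (· ∈ H) F]
  rw [Finset.sum_eq_zero (fun k hk => h0 k (Finset.mem_filter.mp hk).2), add_zero]
  rw [Finset.sum_subtype (p := (· ∈ H)) (Finset.univ.filter (· ∈ H))
    (fun x => by simp) F]

lemma triple_key (f D₁ D₂ : G → ℂ) (hf : ∀ g x : G, f (x * g * x⁻¹) = f g) :
    ∑ k : G, ∑ x : G, ∑ y : G, f k * D₁ (x * k * x⁻¹) * D₂ (y * k * y⁻¹)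
      = (Fintype.card G : ℂ) * ∑ x : G, ∑ k : G, f k * D₁ (x * k * x⁻¹) * D₂ k := by
  classical
  rw [Finset.sum_comm]
  rw [Finset.sum_congr rfl fun x _ => Finset.sum_comm]
  rw [Finset.sum_comm]
  have hy : ∀ y : G, ∑ x : G, ∑ k : G, f k * D₁ (x * k * x⁻¹) * D₂ (y * k * y⁻¹)
      = ∑ x : G, ∑ k : G, f k * D₁ (x * k * x⁻¹) * D₂ k := by
    intro y
    have hx : ∀ x : G, ∑ k : G, f k * D₁ (x * k * x⁻¹) * D₂ (y * k * y⁻¹)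
        = ∑ k : G, f k * D₁ ((x * y⁻¹) * k * (x * y⁻¹)⁻¹) * D₂ k := by
      intro x
      rw [← Equiv.sum_comp ((Equiv.mulLeft y⁻¹).trans (Equiv.mulRight y))
        (fun k => f k * D₁ (x * k * x⁻¹) * D₂ (y * k * y⁻¹))]
      refine Finset.sum_congr rfl fun k _ => ?_
      simp only [Equiv.trans_apply, Equiv.coe_mulLeft, Equiv.coe_mulRight]
      have h1 : f (y⁻¹ * k * y) = f k := by
        have := hf k y⁻¹
        simpa using this
      have h2 : y * (y⁻¹ * k * y) * y⁻¹ = k := by group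
      have h3 : x * (y⁻¹ * k * y) * x⁻¹ = (x * y⁻¹) * k * (x * y⁻¹)⁻¹ := by group
      rw [h1, h2, h3]
    rw [Finset.sum_congr rfl fun x _ => hx x]
    rw [← Equiv.sum_comp (Equiv.mulRight y)
      (fun x => ∑ k : G, f k * D₁ ((x * y⁻¹) * k * (x * y⁻¹)⁻¹) * D₂ k)]
    refine Finset.sum_congr rfl fun x _ => Finset.sum_congr rfl fun k _ => ?_
    simp only [Equiv.coe_mulRight]
    have h4 : (x * y) * y⁻¹ * k * ((x * y) * y⁻¹)⁻¹ = x * k * x⁻¹ := by group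
    rw [h4]
  rw [Finset.sum_congr rfl fun y _ => hy y, Finset.sum_const, Finset.card_univ,
    nsmul_eq_mul]

end Aux

/-- For a finite group `G`, a normal subgroup `H ⊴ G`, a class function
`f : G → ℂ` and finite-dimensional complex representations `τ₁, τ₂` of `H`:
`(1/|H|) ∑_{g ∈ G} ⟨(f|_H)·χ_{τ₁^g}, χ_{τ₂}⟩_H = ⟨f·χ_{Ind τ₁}, χ_{Ind τ₂}⟩_G`. -/
theorem sum_conj_charInner_eq_ind_charInner
    {G : Type*} [Group G] [Fintype G] {H : Subgroup G} (hH : H.Normal) [Fintype H]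
    (f : G → ℂ) (hf : ∀ g x : G, f (x * g * x⁻¹) = f g)
    {V₁ V₂ : Type*} [AddCommGroup V₁] [Module ℂ V₁] [FiniteDimensional ℂ V₁]
    [AddCommGroup V₂] [Module ℂ V₂] [FiniteDimensional ℂ V₂]
    (τ₁ : Representation ℂ H V₁) (τ₂ : Representation ℂ H V₂) :
    (Fintype.card H : ℂ)⁻¹ *
        ∑ g : G, charInner H (fun h => f (h : G) * rchar (conjRep hH τ₁ g) h) (rchar τ₂)
      = charInner G (fun g => f g * rchar (ind τ₁) g) (rchar (ind τ₂)) := by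
  classical
  have hG : (Fintype.card G : ℂ) ≠ 0 := by exact_mod_cast Fintype.card_ne_zero
  -- abbreviations
  set c : ℂ := (Fintype.card H : ℂ)⁻¹ with hc
  -- LHS inner sums
  have hinner : ∀ g : G,
      charInner H (fun h => f (h : G) * rchar (conjRep hH τ₁ g) h) (rchar τ₂)
        = c * ∑ k : G, f k * Dfun τ₁ (g * k * g⁻¹) * (starRingEnd ℂ) (Dfun τ₂ k) := by
    intro g
    rw [charInner]
    congr 1
    rw [sum_eq_sum_subgroup
      (fun k => f k * Dfun τ₁ (g * k * g⁻¹) * (starRingEnd ℂ) (Dfun τ₂ k))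
      (fun k hk => by rw [Dfun_neg τ₂ hk, map_zero, mul_zero])]
    refine Finset.sum_congr rfl fun h _ => ?_
    rw [Dfun_pos τ₁ (hH.conj_mem _ h.2 g), Dfun_pos τ₂ h.2, Subtype.coe_eta]
    rfl
  -- RHS term expansion
  have hstar : ∀ k : G, (starRingEnd ℂ) (rchar (ind τ₂) k)
      = c * ∑ y : G, (starRingEnd ℂ) (Dfun τ₂ (y * k * y⁻¹)) := by
    intro k
    rw [rchar_ind, map_mul, map_sum, map_inv₀, map_natCast]
  have hterm : ∀ k : G, f k * rchar (ind τ₁) k * (starRingEnd ℂ) (rchar (ind τ₂) k)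
      = (c * c) * ∑ x : G, ∑ y : G,
          f k * Dfun τ₁ (x * k * x⁻¹) * (starRingEnd ℂ) (Dfun τ₂ (y * k * y⁻¹)) := by
    intro k
    rw [rchar_ind τ₁ k, hstar k]
    calc f k * (c * ∑ x : G, Dfun τ₁ (x * k * x⁻¹))
          * (c * ∑ y : G, (starRingEnd ℂ) (Dfun τ₂ (y * k * y⁻¹)))
        = (c * c) * ((∑ x : G, f k * Dfun τ₁ (x * k * x⁻¹))
            * (∑ y : G, (starRingEnd ℂ) (Dfun τ₂ (y * k * y⁻¹)))) := by
          rw [← Finset.mul_sum]; ring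
      _ = (c * c) * ∑ x : G, ∑ y : G,
            f k * Dfun τ₁ (x * k * x⁻¹) * (starRingEnd ℂ) (Dfun τ₂ (y * k * y⁻¹)) := by
          rw [Finset.sum_mul_sum]
  -- assemble
  rw [Finset.sum_congr rfl fun g _ => hinner g, ← Finset.mul_sum]
  rw [charInner, Finset.sum_congr rfl fun k _ => hterm k, ← Finset.mul_sum]
  rw [triple_key f (Dfun τ₁) (fun w => (starRingEnd ℂ) (Dfun τ₂ w)) hf]
  field_simp

end McKaySlodowy
end
end

section
/- Let G be a finite subgroup of SL₂(ℂ) and H a normal subgroup of G. Let χ_G : G → ℂ be the character of the natural 2-dimensional representation T_G given by the inclusion G ⊆ SL₂(ℂ) (so χ_G(g) = trace of the matrix g), and let χ_H := χ_G|_H be the character of its restriction T_H to H. Then for all finite-dimensional complex representations τ₁, τ₂ of H, (1/|H|) · Σ_{g ∈ G} ⟨ (χ_H − 2) · χ_{τ₁^g}, χ_{τ₂} ⟩_H = ⟨ (χ_G − 2) · χ_{Ind τ₁}, χ_{Ind τ₂} ⟩_G, where χ_{Ind τᵢ} is the character of the induced representation Ind_H^G τᵢ and χ_H − 2 (resp.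 χ_G − 2) denotes the function h ↦ χ_H(h) − 2 (resp. g ↦ χ_G(g) − 2). -/
noncomputable section

open scoped TensorProduct

namespace McKaySlodowy

variable {G : Type*} [Group G] {H : Subgroup G}
variable {V : Type*} [AddCommGroup V] [Module ℂ V]

section Helpers

-- ====== helpers ======

open LinearMap in
lemma trace_pi_twist {ι : Type*} [Fintype ι] [DecidableEq ι]
    {W : Type*} [AddCommGroup W] [Module ℂ W] [FiniteDimensional ℂ W]
    (σ : ι → ι) (A : ι → (W →ₗ[ℂ] W)) :
    trace ℂ (ι → W) (LinearMap.pi fun i => (A i) ∘ₗ (LinearMap.proj (σ i))) =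
      ∑ i, if σ i = i then trace ℂ W (A i) else 0 := by
  classical
  let b := Module.finBasis ℂ W
  let B := Pi.basis (fun _ : ι => b)
  rw [trace_eq_matrix_trace ℂ B, Matrix.trace, ← Finset.univ_sigma_univ, Finset.sum_sigma]
  refine Finset.sum_congr rfl fun i _ => ?_
  by_cases h : σ i = i
  · rw [if_pos h, trace_eq_matrix_trace ℂ b, Matrix.trace]
    refine Finset.sum_congr rfl fun k _ => ?_
    simp [Matrix.diag, LinearMap.toMatrix_apply, B, Pi.basis_apply, h, b, Pi.single_apply]
  · rw [if_neg h]
    refine Finset.sum_eq_zero fun k _ => ?_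
    simp [Matrix.diag, LinearMap.toMatrix_apply, B, Pi.basis_apply, h, b, Pi.single_apply]

lemma rchar_conj {K : Type*} [Group K] {W : Type*} [AddCommGroup W] [Module ℂ W]
    (τ : Representation ℂ K W) (a b : K) : rchar τ (a * b * a⁻¹) = rchar τ b := by
  show LinearMap.trace ℂ W (τ (a * b * a⁻¹)) = LinearMap.trace ℂ W (τ b)
  have h1 : τ (a * b * a⁻¹) = (τ a * τ b) * τ a⁻¹ := by rw [← map_mul, ← map_mul]
  rw [h1, LinearMap.trace_mul_comm, ← mul_assoc, ← map_mul, inv_mul_cancel, map_one, one_mul]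

lemma mul_out_inv_mem (hH : H.Normal) (x : G) :
    x * ((QuotientGroup.mk x : G ⧸ H).out)⁻¹ ∈ H := by
  have hu : ((QuotientGroup.mk x : G ⧸ H).out)⁻¹ * x ∈ H :=
    QuotientGroup.eq.mp (QuotientGroup.out_eq' _)
  have := hH.conj_mem _ hu x
  simpa [mul_assoc] using this

/-- conjugation by `g` as an equivalence of `H`. -/
def conjEquiv (hH : H.Normal) (g : G) : H ≃ H where
  toFun h := ⟨g * h * g⁻¹, hH.conj_mem _ h.2 g⟩
  invFun h := ⟨g⁻¹ * h * g, by simpa using hH.conj_mem _ h.2 g⁻¹⟩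
  left_inv h := Subtype.ext (by group)
  right_inv h := Subtype.ext (by group)

def qhEquiv (H : Subgroup G) : (G ⧸ H) × H ≃ G where
  toFun p := p.1.out * p.2
  invFun g := (QuotientGroup.mk g,
    ⟨((QuotientGroup.mk g : G ⧸ H).out)⁻¹ * g, QuotientGroup.eq.mp (QuotientGroup.out_eq' _)⟩)
  left_inv := by
    rintro ⟨q, h⟩
    have hq : (QuotientGroup.mk (q.out * h) : G ⧸ H) = q := by
      rw [QuotientGroup.mk_mul_of_mem _ h.2, QuotientGroup.out_eq']
    refine Prod.ext hq (Subtype.ext ?_)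
    simp only [hq]
    group
  right_inv g := by simp

variable [Fintype G]

def indEquiv (hH : H.Normal) (τ : Representation ℂ H V) : IndV τ ≃ₗ[ℂ] ((G ⧸ H) → V) where
  toFun f q := f.1 q.out
  map_add' f g := rfl
  map_smul' c f := rfl
  invFun φ := ⟨fun x => τ ⟨x * ((QuotientGroup.mk x : G ⧸ H).out)⁻¹, mul_out_inv_mem hH x⟩
      (φ (QuotientGroup.mk x)), by
    intro h x
    have hmk : (QuotientGroup.mk (↑h * x) : G ⧸ H) = QuotientGroup.mk x := by
      apply QuotientGroup.eq.mpr
      simpa [mul_assoc] using hH.conj_mem _ (H.inv_mem h.2) x⁻¹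
    have hval : (⟨↑h * x * ((QuotientGroup.mk (↑h * x) : G ⧸ H).out)⁻¹,
          mul_out_inv_mem hH _⟩ : H)
        = h * ⟨x * ((QuotientGroup.mk x : G ⧸ H).out)⁻¹, mul_out_inv_mem hH x⟩ := by
      ext
      simp only [hmk, Subgroup.coe_mul, mul_assoc]
    show τ ⟨↑h * x * ((QuotientGroup.mk (↑h * x) : G ⧸ H).out)⁻¹, mul_out_inv_mem hH _⟩
        (φ (QuotientGroup.mk (↑h * x))) = _
    rw [hval, map_mul, hmk]
    rfl⟩
  left_inv f := by
    apply Subtype.ext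
    funext x
    have := f.2 ⟨x * ((QuotientGroup.mk x : G ⧸ H).out)⁻¹, mul_out_inv_mem hH x⟩
      (QuotientGroup.mk x : G ⧸ H).out
    simp only at this ⊢
    rw [← this]
    congr 1
    group
  right_inv φ := by
    funext q
    simp only
    have hq : (QuotientGroup.mk (q.out) : G ⧸ H) = q := QuotientGroup.out_eq' q
    have h1 : (⟨q.out * ((QuotientGroup.mk (q.out) : G ⧸ H).out)⁻¹,
        mul_out_inv_mem hH _⟩ : H) = 1 := by
      ext; simp [hq]
    rw [h1, hq, map_one]
    rfl

end Helpers

section Helpers2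
variable [Fintype G] [Fintype (G ⧸ H)] [DecidableEq (G ⧸ H)]

open Classical in
lemma rchar_ind_eq (hH : H.Normal) (τ : Representation ℂ H V) [FiniteDimensional ℂ V] (g : G) :
    rchar (ind τ) g =
      if hg : g ∈ H then
        ∑ q : G ⧸ H, rchar τ ⟨q.out * g * q.out⁻¹, hH.conj_mem _ hg _⟩
      else 0 := by
  have key : (indEquiv hH τ).conj ((ind τ) g)
      = LinearMap.pi fun q : G ⧸ H =>
          (τ ⟨q.out * g * ((QuotientGroup.mk (q.out * g) : G ⧸ H).out)⁻¹,
            mul_out_inv_mem hH _⟩ : V →ₗ[ℂ] V) ∘ₗ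
          (LinearMap.proj (QuotientGroup.mk (q.out * g) : G ⧸ H)) := by
    ext φ q
    simp only [LinearEquiv.conj_apply, indEquiv, ind, LinearMap.coe_comp, Function.comp_apply,
      LinearEquiv.coe_mk, LinearMap.coe_mk, AddHom.coe_mk, LinearMap.pi_apply,
      LinearMap.coe_proj, Function.eval]
    congr 1 <;> rw [QuotientGroup.mk_mul, QuotientGroup.out_eq']
  have tr : rchar (ind τ) g
      = LinearMap.trace ℂ ((G ⧸ H) → V) ((indEquiv hH τ).conj ((ind τ) g)) := by
    rw [LinearMap.trace_conj']; rfl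
  rw [tr, key, trace_pi_twist]
  by_cases hg : g ∈ H
  · rw [dif_pos hg]
    refine Finset.sum_congr rfl fun q _ => ?_
    have hq : (QuotientGroup.mk (q.out * g) : G ⧸ H) = q := by
      rw [QuotientGroup.mk_mul_of_mem _ hg, QuotientGroup.out_eq']
    rw [if_pos hq]
    have : (⟨q.out * g * ((QuotientGroup.mk (q.out * g) : G ⧸ H).out)⁻¹,
        mul_out_inv_mem hH _⟩ : H) = ⟨q.out * g * q.out⁻¹, hH.conj_mem _ hg _⟩ := by
      ext; simp only [hq]
    rw [this]; rfl
  · rw [dif_neg hg]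
    refine Finset.sum_eq_zero fun q _ => ?_
    rw [if_neg]
    intro hq
    have h1 : (QuotientGroup.mk (q.out * g) : G ⧸ H) = QuotientGroup.mk q.out := by
      rw [QuotientGroup.out_eq']; exact hq
    have h2 := QuotientGroup.eq.mp h1
    have h3 : g⁻¹ ∈ H := by simpa [mul_assoc] using h2
    exact hg (by simpa using H.inv_mem h3)

end Helpers2

set_option maxHeartbeats 1600000 in
/-- For a finite subgroup `G ⊆ SL₂(ℂ)` with natural `2`-dimensional character
`χ_G`, a normal subgroup `H ⊴ G` with `χ_H = χ_G|_H`, and finite-dimensional complex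
representations `τ₁, τ₂` of `H`:
`(1/|H|) ∑_{g ∈ G} ⟨(χ_H − 2)·χ_{τ₁^g}, χ_{τ₂}⟩_H = ⟨(χ_G − 2)·χ_{Ind τ₁}, χ_{Ind τ₂}⟩_G`. -/
theorem sum_conj_charInner_eq_ind_charInner_SL2
    (G : Subgroup SL2) [Fintype G] (H : Subgroup G) (hH : H.Normal) [Fintype H]
    {V₁ V₂ : Type*} [AddCommGroup V₁] [Module ℂ V₁] [FiniteDimensional ℂ V₁]
    [AddCommGroup V₂] [Module ℂ V₂] [FiniteDimensional ℂ V₂]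
    (τ₁ : Representation ℂ H V₁) (τ₂ : Representation ℂ H V₂) :
    (Fintype.card H : ℂ)⁻¹ *
        ∑ g : G, charInner H
          (fun h => (rchar (natRep G) ((h : G)) - 2) * rchar (conjRep hH τ₁ g) h)
          (rchar τ₂)
      = charInner G
          (fun g => (rchar (natRep G) g - 2) * rchar (ind τ₁) g)
          (rchar (ind τ₂)) := by
  classical
  haveI : H.Normal := hH
  letI : Fintype (↥G ⧸ H) := Fintype.ofFinite _
  obtain ⟨Φ, hΦ⟩ : ∃ Φ : ↥G → ℂ, Φ = fun z => ∑ h : H, (rchar (natRep G) ((h : ↥G)) - 2) *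
      rchar τ₁ ⟨z * (h : ↥G) * z⁻¹, hH.conj_mem _ h.2 z⟩ *
      (starRingEnd ℂ) (rchar τ₂ h) := ⟨_, rfl⟩
  -- Φ is invariant under right multiplication by H
  have Φ_coset : ∀ (z : ↥G) (h₀ : H), Φ (z * (h₀ : ↥G)) = Φ z := by
    intro z h₀
    simp only [hΦ]
    refine Fintype.sum_equiv (conjEquiv hH ((h₀ : ↥G))) _ _ fun h => ?_
    have e1 : (conjEquiv hH ((h₀ : ↥G))) h = h₀ * h * h₀⁻¹ := by
      ext; simp [conjEquiv]
    rw [e1]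
    have e2 : rchar (natRep G) (((h₀ * h * h₀⁻¹ : H) : ↥G)) = rchar (natRep G) ((h : ↥G)) := by
      have hc : ((h₀ * h * h₀⁻¹ : H) : ↥G) = (h₀ : ↥G) * (h : ↥G) * ((h₀ : ↥G))⁻¹ := by
        push_cast; rfl
      rw [hc]; exact rchar_conj _ _ _
    have e3 : rchar τ₂ (h₀ * h * h₀⁻¹) = rchar τ₂ h := rchar_conj τ₂ h₀ h
    have e4 : (⟨(z * (h₀ : ↥G)) * (h : ↥G) * (z * (h₀ : ↥G))⁻¹,
          hH.conj_mem _ h.2 (z * (h₀ : ↥G))⟩ : H)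
        = ⟨z * ((h₀ * h * h₀⁻¹ : H) : ↥G) * z⁻¹, hH.conj_mem _ (h₀ * h * h₀⁻¹).2 z⟩ := by
      ext; push_cast; group
    rw [e2, e3, e4]
  have Φ_mk : ∀ g : ↥G, Φ g = Φ (QuotientGroup.mk g : ↥G ⧸ H).out := by
    intro g
    have h1 : (QuotientGroup.mk g : ↥G ⧸ H).out *
        ((QuotientGroup.mk g : ↥G ⧸ H).out⁻¹ * g) = g := by group
    conv_lhs => rw [← h1]
    exact Φ_coset _ ⟨_, QuotientGroup.eq.mp (QuotientGroup.out_eq' _)⟩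
  -- sum over G in terms of sum over the quotient
  have sum_G : ∑ g : ↥G, Φ g = (Fintype.card H : ℂ) * ∑ q : ↥G ⧸ H, Φ q.out := by
    rw [← Equiv.sum_comp (qhEquiv H) Φ, Fintype.sum_prod_type]
    have e6 : ∀ q : ↥G ⧸ H, ∀ h : H, Φ ((qhEquiv H) (q, h)) = Φ q.out := fun q h =>
      Φ_coset q.out h
    simp_rw [e6]
    simp [Finset.sum_const, Finset.card_univ, Finset.mul_sum, mul_comm]
  -- left-hand side
  have lhs_eq : (Fintype.card H : ℂ)⁻¹ * ∑ g : ↥G, charInner H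
        (fun h => (rchar (natRep G) ((h : ↥G)) - 2) * rchar (conjRep hH τ₁ g) h) (rchar τ₂)
      = (Fintype.card H : ℂ)⁻¹ * (Fintype.card H : ℂ)⁻¹ * ∑ g : ↥G, Φ g := by
    simp only [charInner, hΦ]
    rw [← Finset.mul_sum, ← mul_assoc]
    exact congrArg _ (Finset.sum_congr rfl fun z _ => Finset.sum_congr rfl fun h _ => rfl)
  -- right-hand side
  have conj_sum : ∀ q r : ↥G ⧸ H, (∑ h : H, (rchar (natRep G) ((h : ↥G)) - 2) *
        rchar τ₁ ⟨q.out * (h : ↥G) * q.out⁻¹, hH.conj_mem _ h.2 q.out⟩ *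
        (starRingEnd ℂ) (rchar τ₂ ⟨r.out * (h : ↥G) * r.out⁻¹, hH.conj_mem _ h.2 r.out⟩))
      = Φ (q.out * r.out⁻¹) := by
    intro q r
    simp only [hΦ]
    refine Fintype.sum_equiv (conjEquiv hH r.out) _ _ fun h => ?_
    have e1 : (((conjEquiv hH r.out) h : H) : ↥G) = r.out * (h : ↥G) * r.out⁻¹ := rfl
    have e2 : rchar (natRep G) (((conjEquiv hH r.out) h : H) : ↥G)
        = rchar (natRep G) ((h : ↥G)) := by
      rw [e1]; exact rchar_conj _ _ _
    have e3 : rchar τ₂ ((conjEquiv hH r.out) h)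
        = rchar τ₂ ⟨r.out * (h : ↥G) * r.out⁻¹, hH.conj_mem _ h.2 r.out⟩ := rfl
    have e4 : (⟨(q.out * r.out⁻¹) * (((conjEquiv hH r.out) h : H) : ↥G) * (q.out * r.out⁻¹)⁻¹,
          hH.conj_mem _ ((conjEquiv hH r.out) h).2 _⟩ : H)
        = ⟨q.out * (h : ↥G) * q.out⁻¹, hH.conj_mem _ h.2 q.out⟩ := by
      apply Subtype.ext
      show (q.out * r.out⁻¹) * (((conjEquiv hH r.out) h : H) : ↥G) * (q.out * r.out⁻¹)⁻¹
          = q.out * (h : ↥G) * q.out⁻¹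
      rw [e1]; group
    rw [e2, e3, e4]
  have rhs_eq : charInner ↥G
        (fun g => (rchar (natRep G) g - 2) * rchar (ind τ₁) g) (rchar (ind τ₂))
      = (Fintype.card ↥G : ℂ)⁻¹ *
          ((Fintype.card (↥G ⧸ H) : ℂ) * ∑ q : ↥G ⧸ H, Φ q.out) := by
    rw [charInner]
    congr 1
    have hzero : ∀ g : ↥G, g ∉ H →
        (rchar (natRep G) g - 2) * rchar (ind τ₁) g * (starRingEnd ℂ) (rchar (ind τ₂) g) = 0 := by
      intro g hg
      rw [rchar_ind_eq hH τ₁ g, rchar_ind_eq hH τ₂ g, dif_neg hg, dif_neg hg]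
      simp
    have step1 : ∑ g : ↥G,
          (rchar (natRep G) g - 2) * rchar (ind τ₁) g * (starRingEnd ℂ) (rchar (ind τ₂) g)
        = ∑ h : H, ((rchar (natRep G) ((h : ↥G)) - 2) * rchar (ind τ₁) ((h : ↥G)) *
            (starRingEnd ℂ) (rchar (ind τ₂) ((h : ↥G)))) := by
      rw [← Finset.sum_filter_of_ne (p := (· ∈ H)) (fun x _ hx => by
        by_contra hmem; exact hx (hzero x hmem))]
      exact Finset.sum_subtype _ (fun x => by simp) _
    rw [step1]
    have step2 : ∀ h : H, (rchar (natRep G) ((h : ↥G)) - 2) * rchar (ind τ₁) ((h : ↥G)) *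
          (starRingEnd ℂ) (rchar (ind τ₂) ((h : ↥G)))
        = ∑ q : ↥G ⧸ H, ∑ r : ↥G ⧸ H, (rchar (natRep G) ((h : ↥G)) - 2) *
            rchar τ₁ ⟨q.out * (h : ↥G) * q.out⁻¹, hH.conj_mem _ h.2 q.out⟩ *
            (starRingEnd ℂ) (rchar τ₂ ⟨r.out * (h : ↥G) * r.out⁻¹, hH.conj_mem _ h.2 r.out⟩) := by
      intro h
      rw [rchar_ind_eq hH τ₁ (h : ↥G), rchar_ind_eq hH τ₂ (h : ↥G), dif_pos h.2, dif_pos h.2,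
        map_sum]
      simp only [Finset.mul_sum, Finset.sum_mul]
      exact Finset.sum_comm
    refine (Finset.sum_congr rfl fun h _ => step2 h).trans ?_
    rw [Finset.sum_comm]
    have step3 : ∀ q : ↥G ⧸ H, (∑ h : H, ∑ r : ↥G ⧸ H, (rchar (natRep G) ((h : ↥G)) - 2) *
            rchar τ₁ ⟨q.out * (h : ↥G) * q.out⁻¹, hH.conj_mem _ h.2 q.out⟩ *
            (starRingEnd ℂ) (rchar τ₂ ⟨r.out * (h : ↥G) * r.out⁻¹, hH.conj_mem _ h.2 r.out⟩))
        = ∑ r : ↥G ⧸ H, Φ (q.out * r.out⁻¹) := by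
      intro q
      rw [Finset.sum_comm]
      exact Finset.sum_congr rfl fun r _ => conj_sum q r
    refine (Finset.sum_congr rfl fun q _ => step3 q).trans ?_
    have e5 : ∀ q r : ↥G ⧸ H, Φ (q.out * r.out⁻¹) = Φ ((q * r⁻¹ : ↥G ⧸ H)).out := by
      intro q r
      rw [Φ_mk (q.out * r.out⁻¹)]
      congr 2
      rw [QuotientGroup.mk_mul, QuotientGroup.mk_inv, QuotientGroup.out_eq',
        QuotientGroup.out_eq']
    refine (Finset.sum_congr rfl fun q _ => Finset.sum_congr rfl fun r _ => e5 q r).trans ?_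
    have e7 : ∀ q : ↥G ⧸ H, ∑ r : ↥G ⧸ H, Φ ((q * r⁻¹ : ↥G ⧸ H)).out
        = ∑ p : ↥G ⧸ H, Φ p.out := fun q =>
      Equiv.sum_comp ((Equiv.inv (↥G ⧸ H)).trans (Equiv.mulLeft q)) (fun p => Φ p.out)
    refine (Finset.sum_congr rfl fun q _ => e7 q).trans ?_
    simp [Finset.sum_const, Finset.card_univ, mul_comm]
  rw [lhs_eq, rhs_eq, sum_G]
  have hcard : (Fintype.card ↥G : ℂ) = (Fintype.card (↥G ⧸ H) : ℂ) * (Fintype.card H : ℂ) := by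
    have := Subgroup.card_eq_card_quotient_mul_card_subgroup H
    simp only [Nat.card_eq_fintype_card] at this
    exact_mod_cast congrArg (Nat.cast : ℕ → ℂ) this
  have hH0 : (Fintype.card H : ℂ) ≠ 0 := Nat.cast_ne_zero.mpr Fintype.card_ne_zero
  have hQ0 : (Fintype.card (↥G ⧸ H) : ℂ) ≠ 0 := Nat.cast_ne_zero.mpr Fintype.card_ne_zero
  rw [hcard]
  field_simp

end McKaySlodowy
end
end
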